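/- arXiv:2507.20153 — 3 statements merged into one kernel-verified Lean document; each statement's English description precedes it below -/
import Mathlib

section
/- Let Q ≥ 1, let 0 < μ_1 < μ_2 < ⋯ < μ_Q be real numbers and let α ≥ 0. Define f_{qℓ} : ℕ × ℕ → ℝ by f_{qℓ}(x, y) = μ_q^x · (μ_ℓ + α·x)^y for 1 ≤ q, ℓ ≤ Q. If real coefficients (d_{qℓ})_{1 ≤ q, ℓ ≤ Q} satisfy Σ_{1 ≤ q, ℓ ≤ Q} d_{qℓ} · f_{qℓ}(x, y) = 0 for all (x, y) ∈ ℕ², then d_{qℓ} = 0 for all q, ℓ. In other words, the Q² functions f_{qℓ} are linearly independent. -/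
lemma aux_exp_li {Q : ℕ} (b : Fin Q → ℝ) (hb : Function.Injective b) (c : Fin Q → ℝ)
    (h : ∀ n : ℕ, ∑ i, c i * b i ^ n = 0) : ∀ i, c i = 0 := by
  have hdet : (Matrix.vandermonde b).det ≠ 0 := by
    rw [Matrix.det_vandermonde]
    refine Finset.prod_ne_zero_iff.2 fun i _ => Finset.prod_ne_zero_iff.2 fun j hj => ?_
    simp only [Finset.mem_Ioi] at hj
    exact sub_ne_zero.2 fun he => (ne_of_gt hj) (hb he.symm).symm
  have hmv : (Matrix.vandermonde b).transpose.mulVec c = 0 := by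
    funext j
    simpa [Matrix.mulVec, Matrix.vandermonde, dotProduct, mul_comm] using h j
  have := Matrix.eq_zero_of_mulVec_eq_zero (by rwa [Matrix.det_transpose]) hmv
  exact fun i => congrFun this i

/-- Let `0 < μ_1 < ⋯ < μ_Q` and `α ≥ 0`. The `Q²` functions
`f_{qℓ}(x, y) = μ_q^x (μ_ℓ + α x)^y` on `ℕ × ℕ` are linearly independent:
if `∑_{q,ℓ} d_{qℓ} f_{qℓ}(x, y) = 0` for all `(x, y) ∈ ℕ²`, then all the
coefficients `d_{qℓ}` vanish. -/
theorem linear_independence_f {Q : ℕ} (hQ : 1 ≤ Q) (μ : Fin Q → ℝ)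
    (hμpos : ∀ q, 0 < μ q) (hμmono : StrictMono μ)
    (α : ℝ) (hα : 0 ≤ α) (d : Fin Q → Fin Q → ℝ)
    (h : ∀ x y : ℕ,
      ∑ q : Fin Q, ∑ ℓ : Fin Q, d q ℓ * (μ q ^ x * (μ ℓ + α * (x : ℝ)) ^ y) = 0) :
    ∀ q ℓ, d q ℓ = 0 := by
  have key : ∀ (x : ℕ) (ℓ : Fin Q), ∑ q, d q ℓ * μ q ^ x = 0 := by
    intro x
    apply aux_exp_li (fun ℓ => μ ℓ + α * (x : ℝ))
      (fun a b hab => hμmono.injective (by linarith [add_left_injective (α * (x:ℝ)) hab]))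
    intro y
    have := h x y
    rw [Finset.sum_comm] at this
    rw [← this]
    refine Finset.sum_congr rfl fun ℓ _ => ?_
    rw [Finset.sum_mul]
    exact Finset.sum_congr rfl fun q _ => by ring
  intro q ℓ
  exact aux_exp_li μ hμmono.injective (fun q => d q ℓ) (fun x => key x ℓ) q
end

section
/- Let Q ≥ 1, let 0 < μ_1 < μ_2 < ⋯ < μ_Q, and let α, α' > 0. Suppose (w_ℓ)_{ℓ=1}^Q and (w'_ℓ)_{ℓ=1}^Q are nonnegative weights each summing to 1, with w_Q > 0 and w'_Q > 0, such that Σ_{ℓ=1}^Q w_ℓ · Pois(y; μ_ℓ + α) = Σ_{ℓ=1}^Q w'_ℓ · Pois(y; μ_ℓ + α') for all y ∈ ℕ. Then α = α' and w_ℓ = w'_ℓ for all ℓ. -/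
/-!
Multiplied by `y!`, a finite Poisson mixture becomes `y ↦ ∑ cᵢ e^{-λᵢ} λᵢ^y`, and geometric
sequences with distinct ratios are linearly independent (Vandermonde), so every rate that occurs
once has coefficient zero. If `α < α'`, the rate `μ_Q + α'` exceeds every other rate on either
side and carries the coefficient `w'_Q e^{-(μ_Q + α')} ≠ 0`; hence `α = α'`, and then the two
mixtures share the same distinct rates, so their weights agree.
-/

/-- Poisson pmf `Pois(x; λ) = e^{-λ} λ^x / x!`. -/
noncomputable def pois (lam : ℝ) (x : ℕ) : ℝ :=
  Real.exp (-lam) * lam ^ x / (Nat.factorial x : ℝ)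

open Finset Nat

theorem Fintype.eq_zero_of_forall_sum_mul_pow_eq_zero {ι R : Type*} [Fintype ι] [CommRing R]
    [IsDomain R] {f v : ι → R} (hf : Function.Injective f)
    (hfv : ∀ j : ℕ, ∑ i, v i * f i ^ j = 0) : v = 0 := by
  set e := Fintype.equivFin ι
  have h : v ∘ e.symm = 0 :=
    Matrix.eq_zero_of_forall_pow_sum_mul_pow_eq_zero (hf.comp e.symm.injective)
      fun j => (e.symm.sum_comp fun i => v i * f i ^ (j : ℕ)).trans (hfv j)
  funext i
  simpa using congrFun h (e i)

theorem coeff_eq_zero_of_forall_sum_mul_pow_eq_zero {ι R : Type*} [Fintype ι] [CommRing R]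
    [IsDomain R] [DecidableEq R] {r c : ι → R} (h : ∀ j : ℕ, ∑ i, c i * r i ^ j = 0) {i₀ : ι}
    (hi₀ : ∀ i, r i = r i₀ → i = i₀) : c i₀ = 0 := by
  set s := univ.image r
  have hfiber := Fintype.eq_zero_of_forall_sum_mul_pow_eq_zero (f := ((↑) : s → R))
    (v := fun x => ∑ i with r i = x, c i) Subtype.val_injective fun j => by
      rw [← h j, ← sum_fiberwise_of_maps_to (g := r) (t := s)
        (fun i _ => mem_image_of_mem r (mem_univ i)), ← sum_coe_sort s]
      refine Fintype.sum_congr _ _ fun x => ?_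
      rw [sum_mul]
      refine sum_congr rfl fun i hi => ?_
      rw [(mem_filter.1 hi).2]
  have hsingle : ({i | r i = r i₀} : Finset ι) = {i₀} := by
    ext i
    simpa using ⟨hi₀ i, fun hi => hi ▸ rfl⟩
  simpa [hsingle] using congrFun hfiber ⟨r i₀, mem_image_of_mem r (mem_univ i₀)⟩

theorem sum_mul_pois {ι : Type*} [Fintype ι] (c r : ι → ℝ) (y : ℕ) :
    ∑ i, c i * pois (r i) y = (∑ i, c i * Real.exp (-r i) * r i ^ y) / y ! := by
  rw [sum_div]
  refine Fintype.sum_congr _ _ fun i => ?_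
  rw [pois]
  ring

theorem coeff_eq_zero_of_forall_sum_mul_pois_eq_zero {ι : Type*} [Fintype ι] {r c : ι → ℝ}
    (h : ∀ y : ℕ, ∑ i, c i * pois (r i) y = 0) {i₀ : ι} (hi₀ : ∀ i, r i = r i₀ → i = i₀) :
    c i₀ = 0 := by
  have hpow : ∀ y : ℕ, ∑ i, c i * Real.exp (-r i) * r i ^ y = 0 := fun y => by
    simpa [sum_mul_pois, factorial_ne_zero] using h y
  simpa [Real.exp_ne_zero] using coeff_eq_zero_of_forall_sum_mul_pow_eq_zero hpow hi₀

theorem shift_le_of_forall_sum_mul_pois_add_eq {ι : Type*} [Fintype ι] {μ : ι → ℝ}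
    (hμ : Function.Injective μ) {top : ι} (htop : ∀ ℓ, μ ℓ ≤ μ top) {α α' : ℝ} {w w' : ι → ℝ}
    (hw' : w' top ≠ 0)
    (heq : ∀ y : ℕ, ∑ ℓ, w ℓ * pois (μ ℓ + α) y = ∑ ℓ, w' ℓ * pois (μ ℓ + α') y) :
    α' ≤ α := by
  by_contra! hlt
  refine hw' (neg_eq_zero.1 (coeff_eq_zero_of_forall_sum_mul_pois_eq_zero
    (r := Sum.elim (μ · + α) (μ · + α')) (c := Sum.elim w (-w')) (i₀ := .inr top)
    (fun y => by simp [Fintype.sum_sum_type, heq y]) ?_))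
  rintro (ℓ | ℓ) h
  · simp only [Sum.elim_inl, Sum.elim_inr] at h
    linarith [htop ℓ]
  · simpa using hμ (by simpa using h)

theorem weights_eq_of_forall_sum_mul_pois_eq {ι : Type*} [Fintype ι] {r : ι → ℝ}
    (hr : Function.Injective r) {w w' : ι → ℝ}
    (heq : ∀ y : ℕ, ∑ ℓ, w ℓ * pois (r ℓ) y = ∑ ℓ, w' ℓ * pois (r ℓ) y) : w = w' :=
  funext fun ℓ => sub_eq_zero.1 <| coeff_eq_zero_of_forall_sum_mul_pois_eq_zero (c := w - w')
    (fun y => by simp [sub_mul, heq y]) fun _ h => hr h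

/-- Identification of the shift in a Poisson mixture with
translated rates: if `0 < μ_1 < ⋯ < μ_Q`, `α, α' > 0`, and `(w_ℓ)`, `(w'_ℓ)`
are nonnegative weights summing to 1 with `w_Q > 0` and `w'_Q > 0`, such that
`∑_ℓ w_ℓ Pois(y; μ_ℓ + α) = ∑_ℓ w'_ℓ Pois(y; μ_ℓ + α')` for all `y ∈ ℕ`,
then `α = α'` and `w = w'`. -/
theorem poisson_mixture_shift_identifiable {Q : ℕ} (hQ : 1 ≤ Q)
    (μ : Fin Q → ℝ) (hμmono : StrictMono μ)
    (α α' : ℝ)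
    (w w' : Fin Q → ℝ)
    (hwQ : 0 < w ⟨Q - 1, by omega⟩) (hw'Q : 0 < w' ⟨Q - 1, by omega⟩)
    (heq : ∀ y : ℕ,
      ∑ ℓ, w ℓ * pois (μ ℓ + α) y = ∑ ℓ, w' ℓ * pois (μ ℓ + α') y) :
    α = α' ∧ w = w' := by
  have htop : ∀ ℓ, μ ℓ ≤ μ ⟨Q - 1, by omega⟩ := fun ℓ =>
    hμmono.monotone (Fin.mk_le_mk.2 (by omega))
  obtain rfl : α = α' := le_antisymm
    (shift_le_of_forall_sum_mul_pois_add_eq hμmono.injective htop hwQ.ne' fun y => (heq y).symm)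
    (shift_le_of_forall_sum_mul_pois_add_eq hμmono.injective htop hw'Q.ne' heq)
  exact ⟨rfl,
    weights_eq_of_forall_sum_mul_pois_eq ((add_left_injective α).comp hμmono.injective) heq⟩
end

section
/- (Identifiability of the Markov-switching discrete Hawkes model.) Let Q ≥ 1 and let θ = (ν, π, μ, α, β) and θ' = (ν', π', μ', α', β') be two parameter sets satisfying: ν_q > 0 and ν'_q > 0 for all q; π and π' are Q×Q row-stochastic matrices; 0 < μ_1 < μ_2 < ⋯ < μ_Q and 0 < μ'_1 < μ'_2 < ⋯ < μ'_Q; α > 0 and α' > 0; β, β' ∈ (0, 1). If p_θ(Y_1 = x, Y_2 = y, Y_3 = z) = p_{θ'}(Y_1 = x, Y_2 = y, Y_3 = z) for every triple (x, y, z) ∈ ℕ³, then ν = ν', π = π', μ = μ', α = α' and β = β'. -/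
open Finset

/-- Joint pmf of the Markov-switching discrete Hawkes model for hidden states
`z : Fin n → Fin Q` and observations `y` (0-based indexing: `z i`, `y i`
correspond to the paper's `z_{i+1}`, `y_{i+1}`):
`p_θ(z_{1:n}, y_{1:n}) = ν_{z_1} ∏_{k=2}^n π_{z_{k-1} z_k}
  ∏_{k=1}^n Pois(y_k; μ_{z_k} + α ∑_{h=1}^{k-1} β^{h-1} y_{k-h})`. -/
noncomputable def jointPMF {Q : ℕ} (ν : Fin Q → ℝ) (π : Fin Q → Fin Q → ℝ)
    (μ : Fin Q → ℝ) (α β : ℝ) (n : ℕ) (z : Fin n → Fin Q) (y : ℕ → ℕ) : ℝ :=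
  (∏ k : Fin n,
    if k.val = 0 then ν (z k)
    else π (z ⟨k.val - 1, lt_of_le_of_lt (Nat.sub_le _ _) k.isLt⟩) (z k)) *
  ∏ k : Fin n,
    pois (μ (z k) + α * ∑ h ∈ Finset.range k.val, β ^ h * (y (k.val - 1 - h) : ℝ))
      (y k.val)

/-- Observation pmf: `p_θ(y_{1:n}) = ∑_{z_{1:n}} p_θ(z_{1:n}, y_{1:n})`. -/
noncomputable def obsPMF {Q : ℕ} (ν : Fin Q → ℝ) (π : Fin Q → Fin Q → ℝ)
    (μ : Fin Q → ℝ) (α β : ℝ) (n : ℕ) (y : ℕ → ℕ) : ℝ :=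
  ∑ z : Fin n → Fin Q, jointPMF ν π μ α β n z y

/-!
Poisson laws with distinct rates are linearly independent (Dedekind's independence of the
characters `k ↦ r ^ k` of `ℕ`), so a finite Poisson mixture determines its mixing weights.
Summing out `Y₃` and then `Y₂` leaves the mixture `∑_q ν_q Pois(μ_q)`, which yields `μ` and `ν`,
and, for each `x`, the law of `(Y₁ = x, Y₂)`: a mixture with rates `μ_ℓ + α x` whose weights are
supported on the states reachable in one step, independently of `x`. Comparing its rate sets at
`x = 0` and `x = 1` yields `α`, and then its weights yield `π`. Finally the rates `μ_m + α β` of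
`Y₃` on the event `(Y₁, Y₂) = (1, 0)` yield `β`.
-/

open Matrix

theorem linearIndependent_fun_pow (R : Type*) [CommRing R] [IsDomain R] :
    LinearIndependent R (fun (r : R) (k : ℕ) => r ^ k) :=
  ((linearIndependent_monoidHom (Multiplicative ℕ) R).comp (powersHom R)
    (powersHom R).injective).map' (LinearEquiv.funCongrLeft R R Multiplicative.ofAdd).toLinearMap
    (LinearEquiv.ker _)

lemma Finset.eq_of_image_add_right_eq {α : Type*} [LinearOrder α] [AddCommMonoid α]
    [IsOrderedCancelAddMonoid α] {s : Finset α} (hs : s.Nonempty) {a b : α}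
    (h : s.image (· + a) = s.image (· + b)) : a = b := by
  have hmax : ∀ c, (s.image (· + c)).max' (hs.image _) = s.max' hs + c := fun c =>
    max'_image add_left_mono s _
  have := hmax a
  simp_rw [h, hmax b] at this
  exact (add_left_cancel this).symm

theorem sum_fun_fin_three {β M : Type*} [Fintype β] [AddCommMonoid M] (f : β → β → β → M) :
    ∑ z : Fin 3 → β, f (z 0) (z 1) (z 2) = ∑ a, ∑ b, ∑ c, f a b c := by
  simp only [← (Fin.consEquiv fun _ => β).sum_comp, Fintype.sum_prod_type, Fintype.sum_unique]
  rfl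

theorem sum_vecMul_of_sum_row_eq_one {n : Type*} [Fintype n] {R : Type*} [CommSemiring R]
    {M : Matrix n n R} (hM : ∀ i, ∑ j, M i j = 1) (v : n → R) : ∑ j, (v ᵥ* M) j = ∑ i, v i := by
  simp only [vecMul, dotProduct]
  rw [sum_comm]
  simp [← mul_sum, hM]

lemma pois_nonneg {r : ℝ} (hr : 0 ≤ r) (x : ℕ) : 0 ≤ pois r x := by
  unfold pois; positivity

lemma pois_pos {r : ℝ} (hr : 0 < r) (x : ℕ) : 0 < pois r x := by
  unfold pois; positivity

lemma hasSum_pois (r : ℝ) : HasSum (pois r) 1 := by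
  have h := (NormedSpace.expSeries_div_hasSum_exp r).mul_left (Real.exp (-r))
  rw [← Real.exp_eq_exp_ℝ, ← Real.exp_add, neg_add_cancel, Real.exp_zero] at h
  exact (funext fun x => mul_div_assoc _ _ _ : pois r = _) ▸ h

theorem linearIndependent_pois : LinearIndependent ℝ pois := by
  refine linearIndependent_iff'.2 fun s g hg r hr => ?_
  suffices g r * Real.exp (-r) = 0 by simpa [Real.exp_ne_zero] using this
  refine linearIndependent_iff'.1 (linearIndependent_fun_pow ℝ) s (fun r => g r * Real.exp (-r))
    (funext fun k => ?_) r hr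
  have hk := congrFun hg k
  simp only [Finset.sum_apply, Pi.smul_apply, smul_eq_mul, pois, Pi.zero_apply, mul_div_assoc',
    ← mul_assoc, ← sum_div, div_eq_zero_iff] at hk ⊢
  exact hk.resolve_right (by positivity)

noncomputable section

section PoissonMixture

variable {ι : Type*} [Fintype ι]

def poisMix (c ρ : ι → ℝ) (x : ℕ) : ℝ := ∑ i, c i * pois (ρ i) x

def mixingWeights (c ρ : ι → ℝ) : ℝ →₀ ℝ := ∑ i, Finsupp.single (ρ i) (c i)

lemma poisMix_eq_linearCombination (c ρ : ι → ℝ) :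
    poisMix c ρ = Finsupp.linearCombination ℝ pois (mixingWeights c ρ) := by
  ext x; simp [poisMix, mixingWeights, Finsupp.linearCombination_single]

lemma mixingWeights_eq_of_poisMix_eq {c c' ρ ρ' : ι → ℝ} (h : poisMix c ρ = poisMix c' ρ') :
    mixingWeights c ρ = mixingWeights c' ρ' :=
  linearIndependent_pois.finsuppLinearCombination_injective <| by
    rwa [← poisMix_eq_linearCombination, ← poisMix_eq_linearCombination]

lemma mixingWeights_apply (c ρ : ι → ℝ) (r : ℝ) :
    mixingWeights c ρ r = ∑ i with ρ i = r, c i := by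
  simp [mixingWeights, Finsupp.finsetSum_apply, Finsupp.single_apply, Finset.sum_filter]

lemma mixingWeights_apply_of_injective {ρ : ι → ℝ} (hρ : ρ.Injective) (c : ι → ℝ) (i : ι) :
    mixingWeights c ρ (ρ i) = c i := by
  classical
  simp [mixingWeights_apply, hρ.eq_iff, sum_filter]

lemma support_mixingWeights {c : ι → ℝ} (hc : 0 ≤ c) (ρ : ι → ℝ) :
    (mixingWeights c ρ).support = (univ.filter (c · ≠ 0)).image ρ := by
  ext r
  simp [mixingWeights_apply, sum_eq_zero_iff_of_nonneg fun i _ => hc i, and_comm]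

lemma eq_of_poisMix_eq {c c' ρ : ι → ℝ} (hρ : ρ.Injective) (h : poisMix c ρ = poisMix c' ρ) :
    c = c' := funext fun i => by
  rw [← mixingWeights_apply_of_injective hρ c, mixingWeights_eq_of_poisMix_eq h,
    mixingWeights_apply_of_injective hρ]

lemma image_support_eq_of_poisMix_eq {c c' ρ ρ' : ι → ℝ} (hc : 0 ≤ c) (hc' : 0 ≤ c')
    (h : poisMix c ρ = poisMix c' ρ') :
    (univ.filter (c · ≠ 0)).image ρ = (univ.filter (c' · ≠ 0)).image ρ' := by
  rw [← support_mixingWeights hc, ← support_mixingWeights hc', mixingWeights_eq_of_poisMix_eq h]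

lemma eq_of_poisMix_eq_of_strictMono [LinearOrder ι] {c c' ρ ρ' : ι → ℝ}
    (hc : ∀ i, 0 < c i) (hc' : ∀ i, 0 < c' i) (hρ : StrictMono ρ) (hρ' : StrictMono ρ')
    (h : poisMix c ρ = poisMix c' ρ') : ρ = ρ' ∧ c = c' := by
  have hsupp := image_support_eq_of_poisMix_eq (fun i => (hc i).le) (fun i => (hc' i).le) h
  simp only [(hc _).ne', (hc' _).ne', ne_eq, not_false_eq_true, filter_true] at hsupp
  obtain rfl : ρ = ρ' := (hρ.range_inj hρ').1 <| by
    simpa [Set.ext_iff] using congrArg (fun s : Finset ℝ => (s : Set ℝ)) hsupp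
  exact ⟨rfl, eq_of_poisMix_eq hρ.injective h⟩

lemma add_eq_of_poisMix_add_eq {c c' ρ ρ' : ι → ℝ} {a b : ℝ} (hc : 0 ≤ c) (hc' : 0 ≤ c')
    (hne : c ≠ 0) (hsupp : (univ.filter (c · ≠ 0)).image ρ = (univ.filter (c' · ≠ 0)).image ρ')
    (h : poisMix c (ρ · + a) = poisMix c' (ρ' · + b)) : a = b := by
  have hshift (s : Finset ι) (f : ι → ℝ) (a : ℝ) :
      s.image (f · + a) = (s.image f).image (· + a) := by
    rw [image_image]; rfl
  have := image_support_eq_of_poisMix_eq hc hc' h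
  rw [hshift, hshift, ← hsupp] at this
  refine Finset.eq_of_image_add_right_eq ?_ this
  simpa [Function.ne_iff, Finset.Nonempty] using hne

lemma poisMix_ne_zero_iff {c ρ : ι → ℝ} (hc : 0 ≤ c) (hρ : ∀ i, 0 < ρ i) (x : ℕ) :
    poisMix c ρ x ≠ 0 ↔ c ≠ 0 := by
  rw [poisMix, Ne, sum_eq_zero_iff_of_nonneg fun i _ => mul_nonneg (hc i) (pois_pos (hρ i) x).le]
  simp [(pois_pos (hρ _) x).ne', funext_iff]

lemma tsum_poisMix (c ρ : ι → ℝ) : ∑' x, poisMix c ρ x = ∑ i, c i :=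
  (hasSum_sum fun i _ => (hasSum_pois (ρ i)).mul_left (c i)).tsum_eq.trans (by simp)

end PoissonMixture

section HiddenMarkov

variable {σ : Type*} [Fintype σ]

/-- `P(Y₁ = x, Z₂ = ℓ)` -/
def predict₂ (ν : σ → ℝ) (π : σ → σ → ℝ) (μ : σ → ℝ) (x : ℕ) : σ → ℝ :=
  (fun q => ν q * pois (μ q) x) ᵥ* π

/-- `P(Y₁ = x, Y₂ = y, Z₃ = m)` -/
def predict₃ (ν : σ → ℝ) (π : σ → σ → ℝ) (μ : σ → ℝ) (α : ℝ) (x y : ℕ) : σ → ℝ :=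
  (fun ℓ => predict₂ ν π μ x ℓ * pois (μ ℓ + α * x) y) ᵥ* π

def twoStepPMF (ν : σ → ℝ) (π : σ → σ → ℝ) (μ : σ → ℝ) (α : ℝ) (x : ℕ) : ℕ → ℝ :=
  poisMix (predict₂ ν π μ x) (fun ℓ => μ ℓ + α * x)

def threeStepPMF (ν : σ → ℝ) (π : σ → σ → ℝ) (μ : σ → ℝ) (α β : ℝ) (x y : ℕ) : ℕ → ℝ :=
  poisMix (predict₃ ν π μ α x y) (fun m => μ m + α * (y + β * x))

variable {ν : σ → ℝ} {π : σ → σ → ℝ} {μ : σ → ℝ} {α : ℝ}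

lemma predict₂_apply (x : ℕ) (ℓ : σ) :
    predict₂ ν π μ x ℓ = poisMix (fun q => ν q * π q ℓ) μ x := by
  simp only [predict₂, poisMix, vecMul, dotProduct, mul_right_comm]

lemma sum_predict₂ (hπ : ∀ q, ∑ ℓ, π q ℓ = 1) (x : ℕ) :
    ∑ ℓ, predict₂ ν π μ x ℓ = poisMix ν μ x :=
  sum_vecMul_of_sum_row_eq_one hπ _

lemma sum_predict₃ (hπ : ∀ q, ∑ ℓ, π q ℓ = 1) (x y : ℕ) :
    ∑ m, predict₃ ν π μ α x y m = twoStepPMF ν π μ α x y :=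
  sum_vecMul_of_sum_row_eq_one hπ _

lemma tsum_threeStepPMF (hπ : ∀ q, ∑ ℓ, π q ℓ = 1) (β : ℝ) (x y : ℕ) :
    ∑' z, threeStepPMF ν π μ α β x y z = twoStepPMF ν π μ α x y := by
  simp only [threeStepPMF, tsum_poisMix, sum_predict₃ hπ]

lemma tsum_twoStepPMF (hπ : ∀ q, ∑ ℓ, π q ℓ = 1) (x : ℕ) :
    ∑' y, twoStepPMF ν π μ α x y = poisMix ν μ x := by
  simp only [twoStepPMF, tsum_poisMix, sum_predict₂ hπ]

lemma predict₂_nonneg (hν : ∀ q, 0 ≤ ν q) (hπ : ∀ q ℓ, 0 ≤ π q ℓ) (hμ : ∀ q, 0 ≤ μ q) (x : ℕ) :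
    0 ≤ predict₂ ν π μ x := fun ℓ => by
  rw [predict₂_apply]
  exact sum_nonneg fun q _ => mul_nonneg (mul_nonneg (hν q) (hπ q ℓ)) (pois_nonneg (hμ q) x)

lemma predict₃_nonneg (hν : ∀ q, 0 ≤ ν q) (hπ : ∀ q ℓ, 0 ≤ π q ℓ) (hμ : ∀ q, 0 ≤ μ q)
    (hα : 0 ≤ α) (x y : ℕ) : 0 ≤ predict₃ ν π μ α x y := fun m =>
  sum_nonneg fun ℓ _ => mul_nonneg (mul_nonneg (predict₂_nonneg hν hπ hμ x ℓ)
    (pois_nonneg (add_nonneg (hμ ℓ) (mul_nonneg hα x.cast_nonneg)) y)) (hπ ℓ m)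

lemma filter_predict₂_ne_zero (hν : ∀ q, 0 < ν q) (hπ : ∀ q ℓ, 0 ≤ π q ℓ)
    (hμ : ∀ q, 0 < μ q) (x : ℕ) :
    univ.filter (predict₂ ν π μ x · ≠ 0) = univ.filter fun ℓ => ∃ q, π q ℓ ≠ 0 :=
  filter_congr fun ℓ _ => by
    rw [predict₂_apply, poisMix_ne_zero_iff (fun q => mul_nonneg (hν q).le (hπ q ℓ)) hμ]
    simp [funext_iff, (hν _).ne']

lemma predict₂_ne_zero [Nonempty σ] (hν : ∀ q, 0 < ν q)
    (hπsum : ∀ q, ∑ ℓ, π q ℓ = 1) (hμ : ∀ q, 0 < μ q) (x : ℕ) : predict₂ ν π μ x ≠ 0 := by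
  have hν0 : ν ≠ 0 := fun h => (hν (Classical.arbitrary σ)).ne' (congrFun h _)
  have hsum := (poisMix_ne_zero_iff (fun q => (hν q).le) hμ x).2 hν0
  rw [← sum_predict₂ hπsum] at hsum
  exact fun h => hsum (by simp [h])

lemma predict₃_ne_zero [Nonempty σ] (hν : ∀ q, 0 < ν q) (hπ : ∀ q ℓ, 0 ≤ π q ℓ)
    (hπsum : ∀ q, ∑ ℓ, π q ℓ = 1) (hμ : ∀ q, 0 < μ q) (hα : 0 ≤ α) (x y : ℕ) :
    predict₃ ν π μ α x y ≠ 0 := by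
  have hsum := (poisMix_ne_zero_iff
    (predict₂_nonneg (fun q => (hν q).le) hπ (fun q => (hμ q).le) x)
    (fun ℓ => add_pos_of_pos_of_nonneg (hμ ℓ) (mul_nonneg hα x.cast_nonneg)) y).2
    (predict₂_ne_zero hν hπsum hμ x)
  rw [← twoStepPMF, ← sum_predict₃ hπsum] at hsum
  exact fun h => hsum (by simp [h])

lemma alpha_eq_of_twoStepPMF_eq [Nonempty σ] {π' : σ → σ → ℝ} {α' : ℝ} (hν : ∀ q, 0 < ν q)
    (hπ : ∀ q ℓ, 0 ≤ π q ℓ) (hπsum : ∀ q, ∑ ℓ, π q ℓ = 1) (hπ' : ∀ q ℓ, 0 ≤ π' q ℓ)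
    (hμ : ∀ q, 0 < μ q) (h : twoStepPMF ν π μ α = twoStepPMF ν π' μ α') : α = α' := by
  have hnn := predict₂_nonneg (fun q => (hν q).le) hπ (fun q => (hμ q).le)
  have hnn' := predict₂_nonneg (fun q => (hν q).le) hπ' (fun q => (hμ q).le)
  have h₀ := image_support_eq_of_poisMix_eq (hnn 0) (hnn' 0) (congrFun h 0)
  have h₁ : poisMix (predict₂ ν π μ 1) (μ · + α) = poisMix (predict₂ ν π' μ 1) (μ · + α') := by
    simpa [twoStepPMF] using congrFun h 1
  -- The states charged by `predict₂ ν π μ x` do not depend on `x`.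
  refine add_eq_of_poisMix_add_eq (hnn 1) (hnn' 1) (predict₂_ne_zero hν hπsum hμ 1) ?_ h₁
  simp only [filter_predict₂_ne_zero hν hπ hμ, filter_predict₂_ne_zero hν hπ' hμ, Nat.cast_zero,
    mul_zero, add_zero] at h₀ ⊢
  exact h₀

lemma transition_eq_of_twoStepPMF_eq {π' : σ → σ → ℝ} (hν : ∀ q, 0 < ν q) (hμ : μ.Injective)
    (h : twoStepPMF ν π μ α = twoStepPMF ν π' μ α) : π = π' := by
  have hpred (x : ℕ) : predict₂ ν π μ x = predict₂ ν π' μ x :=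
    eq_of_poisMix_eq (fun ℓ ℓ' e => hμ (add_right_cancel e)) (congrFun h x)
  funext q ℓ
  have hcol : poisMix (fun q => ν q * π q ℓ) μ = poisMix (fun q => ν q * π' q ℓ) μ :=
    funext fun x => by simpa only [predict₂_apply] using congrFun (hpred x) ℓ
  exact mul_left_cancel₀ (hν q).ne' (congrFun (eq_of_poisMix_eq hμ hcol) q)

lemma beta_eq_of_threeStepPMF_eq [Nonempty σ] {β β' : ℝ} (hν : ∀ q, 0 < ν q)
    (hπ : ∀ q ℓ, 0 ≤ π q ℓ) (hπsum : ∀ q, ∑ ℓ, π q ℓ = 1) (hμ : ∀ q, 0 < μ q) (hα : 0 < α)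
    (h : threeStepPMF ν π μ α β = threeStepPMF ν π μ α β') : β = β' := by
  have h₁ : poisMix (predict₃ ν π μ α 1 0) (μ · + α * β) =
      poisMix (predict₃ ν π μ α 1 0) (μ · + α * β') := by
    simpa [threeStepPMF] using congrFun (congrFun h 1) 0
  have hnn := predict₃_nonneg (fun q => (hν q).le) hπ (fun q => (hμ q).le) hα.le 1 0
  exact mul_left_cancel₀ hα.ne'
    (add_eq_of_poisMix_add_eq hnn hnn (predict₃_ne_zero hν hπ hπsum hμ hα.le 1 0) rfl h₁)

end HiddenMarkov

lemma obsPMF_three {Q : ℕ} (ν : Fin Q → ℝ) (π : Fin Q → Fin Q → ℝ) (μ : Fin Q → ℝ) (α β : ℝ)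
    (x y z : ℕ) :
    obsPMF ν π μ α β 3 (fun i => if i = 0 then x else if i = 1 then y else z) =
      threeStepPMF ν π μ α β x y z := by
  let F (q ℓ m : Fin Q) : ℝ := ν q * π q ℓ * π ℓ m *
    (pois (μ q) x * pois (μ ℓ + α * x) y * pois (μ m + α * (y + β * x)) z)
  have hjoint (s : Fin 3 → Fin Q) :
      jointPMF ν π μ α β 3 s (fun i => if i = 0 then x else if i = 1 then y else z) =
        F (s 0) (s 1) (s 2) := by
    simp [F, jointPMF, Fin.prod_univ_three, sum_range_succ]
  rw [obsPMF, sum_congr rfl fun s _ => hjoint s, sum_fun_fin_three F, sum_comm_cycle]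
  simp only [threeStepPMF, poisMix, predict₃, predict₂, vecMul, dotProduct, sum_mul]
  refine sum_congr rfl fun m _ => ?_
  rw [sum_comm]
  exact sum_congr rfl fun ℓ _ => sum_congr rfl fun q _ => by ring

end

theorem markov_switching_hawkes_identifiable_general {Q : ℕ} (hQ : 1 ≤ Q)
    (ν ν' : Fin Q → ℝ) (π π' : Fin Q → Fin Q → ℝ) (μ μ' : Fin Q → ℝ)
    (α β α' β' : ℝ)
    (hν : ∀ q, 0 < ν q) (hν' : ∀ q, 0 < ν' q)
    (hπ : ∀ q ℓ, 0 ≤ π q ℓ) (hπsum : ∀ q, ∑ ℓ, π q ℓ = 1)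
    (hπ' : ∀ q ℓ, 0 ≤ π' q ℓ) (hπ'sum : ∀ q, ∑ ℓ, π' q ℓ = 1)
    (hμpos : ∀ q, 0 < μ q) (hμmono : StrictMono μ) (hμ'mono : StrictMono μ')
    (hα : 0 < α)
    (heq : ∀ x y z : ℕ,
      obsPMF ν π μ α β 3 (fun i => if i = 0 then x else if i = 1 then y else z) =
      obsPMF ν' π' μ' α' β' 3
        (fun i => if i = 0 then x else if i = 1 then y else z)) :
    ν = ν' ∧ π = π' ∧ μ = μ' ∧ α = α' ∧ β = β' := by
  have : Nonempty (Fin Q) := ⟨⟨0, hQ⟩⟩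
  have h₃ : threeStepPMF ν π μ α β = threeStepPMF ν' π' μ' α' β' := by
    ext x y z
    simpa only [obsPMF_three] using heq x y z
  have h₂ : twoStepPMF ν π μ α = twoStepPMF ν' π' μ' α' := by
    ext x y
    rw [← tsum_threeStepPMF hπsum β, ← tsum_threeStepPMF hπ'sum β', h₃]
  have h₁ : poisMix ν μ = poisMix ν' μ' := by
    ext x
    rw [← tsum_twoStepPMF (α := α) hπsum, ← tsum_twoStepPMF (α := α') hπ'sum, h₂]
  obtain ⟨rfl, rfl⟩ := eq_of_poisMix_eq_of_strictMono hν hν' hμmono hμ'mono h₁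
  obtain rfl := alpha_eq_of_twoStepPMF_eq hν hπ hπsum hπ' hμpos h₂
  obtain rfl := transition_eq_of_twoStepPMF_eq hν hμmono.injective h₂
  obtain rfl := beta_eq_of_threeStepPMF_eq hν hπ hπsum hμpos hα h₃
  exact ⟨rfl, rfl, rfl, rfl, rfl⟩

/-- Identifiability of the Markov-switching discrete Hawkes
model: under the positivity, stochasticity and ordering assumptions below,
if the three-step observation pmfs of `θ = (ν, π, μ, α, β)` and
`θ' = (ν', π', μ', α', β')` coincide on all of `ℕ³`, then `θ = θ'`. -/
theorem markov_switching_hawkes_identifiable {Q : ℕ} (hQ : 1 ≤ Q)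
    (ν ν' : Fin Q → ℝ) (π π' : Fin Q → Fin Q → ℝ) (μ μ' : Fin Q → ℝ)
    (α β α' β' : ℝ)
    (hν : ∀ q, 0 < ν q) (hνsum : ∑ q, ν q = 1)
    (hν' : ∀ q, 0 < ν' q) (hν'sum : ∑ q, ν' q = 1)
    (hπ : ∀ q ℓ, 0 ≤ π q ℓ) (hπsum : ∀ q, ∑ ℓ, π q ℓ = 1)
    (hπ' : ∀ q ℓ, 0 ≤ π' q ℓ) (hπ'sum : ∀ q, ∑ ℓ, π' q ℓ = 1)
    (hμpos : ∀ q, 0 < μ q) (hμmono : StrictMono μ)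
    (hμ'pos : ∀ q, 0 < μ' q) (hμ'mono : StrictMono μ')
    (hα : 0 < α) (hα' : 0 < α')
    (hβ0 : 0 < β) (hβ1 : β < 1) (hβ'0 : 0 < β') (hβ'1 : β' < 1)
    (heq : ∀ x y z : ℕ,
      obsPMF ν π μ α β 3 (fun i => if i = 0 then x else if i = 1 then y else z) =
      obsPMF ν' π' μ' α' β' 3
        (fun i => if i = 0 then x else if i = 1 then y else z)) :
    ν = ν' ∧ π = π' ∧ μ = μ' ∧ α = α' ∧ β = β' :=
  markov_switching_hawkes_identifiable_general hQ ν ν' π π' μ μ' α β α' β' hν hν' hπ hπsum hπ'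
    hπ'sum hμpos hμmono hμ'mono hα heq
end
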